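/- Binet formula for generalized hybrid Fibonacci numbers: if α ≠ β are the roots of t² − pt − q = 0, then for all n ≥ 0, HJ_n = (A·α̲·αⁿ − B·β̲·βⁿ)/(α − β), where A = b − aβ, B = b − aα, α̲ = 1 + α·i + α²·ε + α³·h, and β̲ = 1 + β·i + β²·ε + β³·h. -/
import Mathlib


open Matrix

noncomputable section

/-- Hybrid numbers modelled via their faithful matrix representation:
the map a+b·i+c·ε+d·h ↦ !![a+c, b-c+d; c-b+d, a-c] is an ℝ-algebra
isomorphism onto M₂(ℝ). -/
abbrev HybridK : Type := Matrix (Fin 2) (Fin 2) ℝ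

/-- the hybrid unit i (i² = −1) -/
def hi : HybridK := !![0, 1; -1, 0]

/-- the hybrid unit ε (ε² = 0) -/
def heps : HybridK := !![1, -1; 1, -1]

/-- the hybrid unit h (h² = 1) -/
def hh : HybridK := !![0, 1; 1, 0]

/-- the hybrid number a + b·i + c·ε + d·h -/
def hyb (a b c d : ℝ) : HybridK := a • (1 : HybridK) + b • hi + c • heps + d • hh

/-- hybrid sequence attached to a real sequence:  x_n + x_{n+1}·i + x_{n+2}·ε + x_{n+3}·h -/
def hybSeq (x : ℕ → ℝ) (n : ℕ) : HybridK := hyb (x n) (x (n+1)) (x (n+2)) (x (n+3))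

lemma hyb_smul (x a b c d : ℝ) : x • hyb a b c d = hyb (x*a) (x*b) (x*c) (x*d) := by
  unfold hyb; module

lemma hyb_sub (a b c d a' b' c' d' : ℝ) :
    hyb a b c d - hyb a' b' c' d' = hyb (a-a') (b-b') (c-c') (d-d') := by
  unfold hyb; module

lemma hyb_congr {a b c d a' b' c' d' : ℝ} (h1 : a = a') (h2 : b = b')
    (h3 : c = c') (h4 : d = d') : hyb a b c d = hyb a' b' c' d' := by
  rw [h1, h2, h3, h4]

/-- Binet formula for generalized hybrid Fibonacci numbers. -/
theorem hybrid_horadam_binet (p q a b : ℝ) (hpq : p ^ 2 + 4 * q > 0)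
    (α β : ℝ) (hα : α = (p + Real.sqrt (p ^ 2 + 4 * q)) / 2)
    (hβ : β = (p - Real.sqrt (p ^ 2 + 4 * q)) / 2)
    (J : ℕ → ℝ) (hJ0 : J 0 = a) (hJ1 : J 1 = b)
    (hrec : ∀ n : ℕ, J (n + 2) = p * J (n + 1) + q * J n) :
    ∀ n : ℕ, hybSeq J n
      = (α - β)⁻¹ •
        ((b - a * β) • (α ^ n • hyb 1 α (α ^ 2) (α ^ 3))
          - (b - a * α) • (β ^ n • hyb 1 β (β ^ 2) (β ^ 3))) := by
  set s := Real.sqrt (p ^ 2 + 4 * q) with hs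
  have hs2 : s ^ 2 = p ^ 2 + 4 * q := Real.sq_sqrt hpq.le
  have hspos : 0 < s := Real.sqrt_pos.mpr hpq
  have hab : α - β = s := by rw [hα, hβ]; ring
  have hαβne : α - β ≠ 0 := by rw [hab]; exact hspos.ne'
  have hα2 : α ^ 2 = p * α + q := by rw [hα]; field_simp; nlinarith [hs2]
  have hβ2 : β ^ 2 = p * β + q := by rw [hβ]; field_simp; nlinarith [hs2]
  have binet : ∀ n : ℕ, J n = (α - β)⁻¹ * ((b - a * β) * α ^ n - (b - a * α) * β ^ n) := by
    intro n
    induction n using Nat.twoStepInduction with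
    | zero => rw [hJ0]; field_simp; ring
    | one => rw [hJ1]; field_simp; ring
    | more n ih1 ih2 =>
      rw [hrec n, ih1, ih2]
      have e1 : α ^ (n+2) = α ^ n * (p * α + q) := by rw [← hα2]; ring
      have e2 : β ^ (n+2) = β ^ n * (p * β + q) := by rw [← hβ2]; ring
      rw [e1, e2]; ring
  intro n
  rw [hybSeq]
  simp only [hyb_smul, hyb_sub]
  rw [binet n, binet (n+1), binet (n+2), binet (n+3)]
  exact hyb_congr (by ring) (by ring) (by ring) (by ring)
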